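/- Fix ε ∈ (0,1) and let B be a ball of radius r contained in Ω = [ε,1]². There is a constant C > 0, depending only on ε, such that for all distinct pairs (a,b), (a',b') ∈ ℤ_{≥0}² with gcd(a,b) = gcd(a',b') = 1, with h := h_{a,b} ≥ h' := h_{a',b'} both sufficiently large, one has |σ_{a,b} ∩ σ_{a',b'} ∩ B| ≤ C |B| (ψ(h)/h)(ψ(h')/h')(1 + 1/(r h sin α)), where α = α(a,b,a',b') is the angle between (a²,b²) and (a'²,b'²). -/

import Mathlib

open MeasureTheory Filter Set

/-- The set `σ_{a,b}(c) = {(x,y) ∈ [0,1]² : |a²x + b²y − c²| < ψ(h_{a,b})}`,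
where `h_{a,b} = max(a,b)`. -/
def sigC (ψ : ℝ → ℝ) (a b c : ℕ) : Set (EuclideanSpace ℝ (Fin 2)) :=
  {p | p 0 ∈ Set.Icc (0 : ℝ) 1 ∧ p 1 ∈ Set.Icc (0 : ℝ) 1 ∧
    |(a : ℝ) ^ 2 * p 0 + (b : ℝ) ^ 2 * p 1 - (c : ℝ) ^ 2| < ψ ((max a b : ℕ) : ℝ)}

/-- The set `σ_{a,b} = ⋃_{c ∈ ℤ_{≥0}} σ_{a,b}(c)`. -/
def sigU (ψ : ℝ → ℝ) (a b : ℕ) : Set (EuclideanSpace ℝ (Fin 2)) :=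
  ⋃ c : ℕ, sigC ψ a b c

/-- The square `Ω = [ε,1]²`. -/
def unitSq (ε : ℝ) : Set (EuclideanSpace ℝ (Fin 2)) :=
  {p | p 0 ∈ Set.Icc ε 1 ∧ p 1 ∈ Set.Icc ε 1}

/-- The vector `(a², b²) ∈ ℝ²`. -/
noncomputable def vSq (a b : ℕ) : EuclideanSpace ℝ (Fin 2) := WithLp.toLp 2 ![(a : ℝ) ^ 2, (b : ℝ) ^ 2]

/-- The angle `α(a,b,a',b')` between `(a²,b²)` and `(a'²,b'²)`. -/
noncomputable def ang (a b a' b' : ℕ) : ℝ :=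
  InnerProductGeometry.angle (vSq a b) (vSq a' b')

/-!
Put `u = (a², b²)` and `v = (a'², b'²)`: `σ_{a,b}(c)` lies in the strip `|⟪u, p⟫ - c²| < ψ(h)`.
On `[ε,1]²` one has `⟪u, p⟫ ≥ ε h²`, so only indices `c ≥ ε h / 2` occur, and consecutive such
squares are `≥ ε h / 2` apart; hence a set on which `⟪u, ·⟫` varies by at most `L` meets
`O(L / (ε h) + 1)` strips of the family. The strips of the `v`-family meeting `B` are
`O(r h' / ε)` in number. Inside one of them, writing `u = (u - l v) + l v` with `u - l v ⊥ v`,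
`⟪u, ·⟫` varies by `O(‖u‖ r sin α + ‖u‖ ψ(h') / ‖v‖ + ψ(h))`, and each cell has area at most
`min (4 ψ(h) ψ(h') / (‖u‖ ‖v‖ sin α)) (4 ψ(h) r / ‖u‖)` (a parallelogram, resp. a strip crossing
a ball). Multiplying out and using `|B| ≥ r²` gives the bound. Coprimality makes `u` and `v`
non-collinear, so that `sin α > 0`.
-/

open InnerProductGeometry Metric
open scoped RealInnerProductSpace

section InnerProductSpace

variable {V : Type*} [NormedAddCommGroup V] [InnerProductSpace ℝ V]

lemma abs_inner_sub_inner_le (w p q : V) : |⟪w, p⟫ - ⟪w, q⟫| ≤ ‖w‖ * dist p q := by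
  rw [← inner_sub_right, dist_eq_norm]
  exact abs_real_inner_le_norm _ _

lemma norm_sub_smul_eq_norm_mul_sin_angle (u : V) {v : V} (hv : v ≠ 0) :
    ‖u - (⟪u, v⟫ / ‖v‖ ^ 2) • v‖ = ‖u‖ * Real.sin (angle u v) := by
  have hv' : ‖v‖ ≠ 0 := norm_ne_zero_iff.2 hv
  rw [← sq_eq_sq₀ (norm_nonneg _) (mul_nonneg (norm_nonneg _) (sin_angle_nonneg u v)),
    norm_sub_sq_real, real_inner_smul_right, norm_smul, Real.norm_eq_abs, mul_pow, sq_abs,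
    mul_pow, Real.sin_sq, ← cos_angle_mul_norm_mul_norm u v]
  field_simp
  ring

lemma abs_inner_div_norm_sq_le (u v : V) : |⟪u, v⟫ / ‖v‖ ^ 2| ≤ ‖u‖ / ‖v‖ := by
  rcases eq_or_ne v 0 with rfl | hv
  · simp
  have hv' : 0 < ‖v‖ := norm_pos_iff.2 hv
  rw [abs_div, abs_pow, abs_norm, div_le_div_iff₀ (by positivity) hv']
  calc |⟪u, v⟫| * ‖v‖ ≤ ‖u‖ * ‖v‖ * ‖v‖ := by gcongr; exact abs_real_inner_le_norm u v
    _ = ‖u‖ * ‖v‖ ^ 2 := by ring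

end InnerProductSpace

theorem measure_iUnion_le_of_sq_near {α : Type*} [MeasurableSpace α] (μ : Measure α)
    (S : ℕ → Set α) {c₀ t ℓ : ℝ} {M : ENNReal} (hc₀ : 0 < c₀) (hℓ : 0 ≤ ℓ)
    (hM : ∀ c, μ (S c) ≤ M) (hS : ∀ c, (S c).Nonempty → c₀ ≤ c ∧ |(c : ℝ) ^ 2 - t| ≤ ℓ) :
    μ (⋃ c, S c) ≤ ENNReal.ofReal (2 * ℓ / c₀ + 1) * M := by
  set m := ⌈√(t - ℓ)⌉₊
  have hm : t - ℓ ≤ (m : ℝ) ^ 2 := (Real.sqrt_le_left m.cast_nonneg).1 (Nat.le_ceil _)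
  have hmem : ∀ c, (S c).Nonempty → c ∈ Finset.Icc m (m + ⌊2 * ℓ / c₀⌋₊) := by
    intro c hc
    obtain ⟨hc₀c, hct⟩ := hS c hc
    rw [abs_le] at hct
    have hmc : m ≤ c := Nat.ceil_le.2 ((Real.sqrt_le_left c.cast_nonneg).2 (by linarith))
    have hmc' : (m : ℝ) ≤ c := by exact_mod_cast hmc
    -- `(c - m) c₀ ≤ (c - m) (c + m) = c² - m² ≤ 2ℓ`
    have : ((c - m : ℕ) : ℝ) ≤ 2 * ℓ / c₀ := by
      rw [Nat.cast_sub hmc, le_div_iff₀ hc₀]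
      nlinarith
    have := Nat.le_floor this
    exact Finset.mem_Icc.2 ⟨hmc, by omega⟩
  calc μ (⋃ c, S c) ≤ μ (⋃ c ∈ Finset.Icc m (m + ⌊2 * ℓ / c₀⌋₊), S c) :=
        measure_mono fun p hp => by
          obtain ⟨c, hc⟩ := mem_iUnion.1 hp
          exact mem_biUnion (hmem c ⟨p, hc⟩) hc
    _ ≤ ∑ c ∈ Finset.Icc m (m + ⌊2 * ℓ / c₀⌋₊), μ (S c) := measure_biUnion_finset_le _ _
    _ ≤ (Finset.Icc m (m + ⌊2 * ℓ / c₀⌋₊)).card • M :=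
        Finset.sum_le_card_nsmul _ _ _ fun c _ => hM c
    _ = (⌊2 * ℓ / c₀⌋₊ + 1) • M := by
        rw [Nat.card_Icc, add_assoc, Nat.add_sub_cancel_left, add_comm]
    _ ≤ ENNReal.ofReal (2 * ℓ / c₀ + 1) * M := by
        rw [nsmul_eq_mul, ← ENNReal.ofReal_natCast]
        gcongr
        push_cast
        gcongr
        exact Nat.floor_le (by positivity)

local notation "E2" => EuclideanSpace ℝ (Fin 2)

def strip (u : E2) (t δ : ℝ) : Set E2 := {p | |⟪u, p⟫ - t| < δ}

@[simp] lemma mem_strip {u p : E2} {t δ : ℝ} : p ∈ strip u t δ ↔ |⟪u, p⟫ - t| < δ := Iff.rfl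

lemma inner_fin_two (u p : E2) : ⟪u, p⟫ = u 0 * p 0 + u 1 * p 1 := by
  simp [PiLp.inner_apply, Fin.sum_univ_two, mul_comm]

theorem volume_strip_inter_strip (u w : E2) (s t δ γ : ℝ) (hδ : 0 ≤ δ)
    (h : u 0 * w 1 - u 1 * w 0 ≠ 0) :
    volume (strip u s δ ∩ strip w t γ) =
      ENNReal.ofReal (4 * δ * γ / |u 0 * w 1 - u 1 * w 0|) := by
  set f := Matrix.toLpLin 2 2 !![u 0, u 1; w 0, w 1]
  have hdet : LinearMap.det f = u 0 * w 1 - u 1 * w 0 := by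
    rw [LinearMap.det_toLpLin, Matrix.det_fin_two_of]
  have hpre : strip u s δ ∩ strip w t γ = f ⁻¹' (WithLp.ofLp ⁻¹'
      univ.pi fun i => Ioo (![s - δ, t - γ] i) (![s + δ, t + γ] i)) := by
    ext p
    simp [strip, f, inner_fin_two, Fin.forall_fin_two, abs_lt, dotProduct,
      Fin.sum_univ_two, sub_lt_iff_lt_add', lt_sub_iff_add_lt]
  rw [hpre, Measure.addHaar_preimage_linearMap _ (hdet ▸ h),
    (PiLp.volume_preserving_ofLp (Fin 2)).measure_preimage
      (MeasurableSet.univ_pi fun _ => measurableSet_Ioo).nullMeasurableSet,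
    Real.volume_pi_Ioo, Fin.prod_univ_two, hdet]
  simp only [Matrix.cons_val_zero, Matrix.cons_val_one]
  rw [← ENNReal.ofReal_mul (by linarith), ← ENNReal.ofReal_mul (abs_nonneg _)]
  congr 1
  rw [abs_inv]
  field_simp
  ring

lemma sin_angle_mul_norm_mul_norm_eq_abs (u v : E2) :
    Real.sin (angle u v) * (‖u‖ * ‖v‖) = |u 0 * v 1 - u 1 * v 0| := by
  rw [sin_angle_mul_norm_mul_norm, inner_fin_two, inner_fin_two, inner_fin_two,
    ← Real.sqrt_sq_eq_abs]
  ring_nf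

lemma sin_angle_pos_of_cross_ne_zero {u v : E2} (huv : u 0 * v 1 - u 1 * v 0 ≠ 0) :
    0 < Real.sin (angle u v) := by
  have hnorm : 0 ≤ ‖u‖ * ‖v‖ := by positivity
  have := sin_angle_mul_norm_mul_norm_eq_abs u v
  exact pos_of_mul_pos_left (this ▸ abs_pos.2 huv) hnorm

lemma ofReal_sq_le_volume_ball (x₀ : E2) {r : ℝ} (hr : 0 ≤ r) :
    ENNReal.ofReal (r ^ 2) ≤ volume (ball x₀ r) := by
  rw [EuclideanSpace.volume_ball_fin_two, ENNReal.ofReal_pow hr]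
  exact le_mul_of_one_le_right' (ENNReal.one_le_ofReal.2 (by linarith [Real.pi_gt_three]))

theorem volume_strip_inter_ball_le (u x₀ : E2) (t : ℝ) {δ r : ℝ} (hδ : 0 ≤ δ) (hu : u ≠ 0) :
    volume (strip u t δ ∩ ball x₀ r) ≤ ENNReal.ofReal (4 * δ * r / ‖u‖) := by
  -- `u` turned by a right angle: the ball lies in a `w`-strip and `|det (u, w)| = ‖u‖²`
  set w : E2 := !₂[-u 1, u 0]
  have hu' : 0 < ‖u‖ := norm_pos_iff.2 hu
  have hnorm : ‖u‖ ^ 2 = u 0 * u 0 + u 1 * u 1 := by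
    rw [← real_inner_self_eq_norm_sq, inner_fin_two]
  have hw : ‖w‖ = ‖u‖ := by
    rw [← sq_eq_sq₀ (norm_nonneg _) (norm_nonneg _), hnorm, ← real_inner_self_eq_norm_sq,
      inner_fin_two]
    simp [w]
    ring
  have hcross : u 0 * w 1 - u 1 * w 0 = ‖u‖ ^ 2 := by
    rw [hnorm]
    simp [w]
  have hball : ball x₀ r ⊆ strip w ⟪w, x₀⟫ (‖u‖ * r) := fun p hp =>
    (abs_inner_sub_inner_le w p x₀).trans_lt (by rw [hw]; exact mul_lt_mul_of_pos_left hp hu')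
  calc volume (strip u t δ ∩ ball x₀ r) ≤ volume (strip u t δ ∩ strip w ⟪w, x₀⟫ (‖u‖ * r)) :=
        measure_mono (inter_subset_inter_right _ hball)
    _ = ENNReal.ofReal (4 * δ * r / ‖u‖) := by
        rw [volume_strip_inter_strip _ _ _ _ _ _ hδ (by rw [hcross]; positivity), hcross,
          abs_of_nonneg (sq_nonneg _)]
        congr 1
        field_simp

-- The `N s r` and `δ` parts of the count pair with the parallelogram bound, the `(N / N') γ`
-- part with the strip-through-a-ball bound.
lemma strip_cell_bound_le {N N' s r δ γ c₀ : ℝ} (hN : 0 < N) (hN' : 0 < N') (hs : 0 < s)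
    (hr : 0 ≤ r) (hδ : 0 ≤ δ) (hγ : 0 ≤ γ) (hc₀ : 0 < c₀) (hδc₀ : 2 * δ ≤ c₀) :
    (2 * (N * s * r + N / N' * γ + δ) / c₀ + 1) * min (4 * δ * γ / (N * N' * s)) (4 * δ * r / N) ≤
      16 * δ * γ * r / (N' * c₀) + 8 * δ * γ / (N * N' * s) := by
  set Vpar := 4 * δ * γ / (N * N' * s) with hVpar
  set Vslab := 4 * δ * r / N with hVslab
  have hpar : min Vpar Vslab ≤ Vpar := min_le_left _ _
  have hslab : min Vpar Vslab ≤ Vslab := min_le_right _ _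
  have h2 : 2 * δ / c₀ + 1 ≤ 2 := by rw [div_add_one hc₀.ne', div_le_iff₀ hc₀]; linarith
  calc _ = 2 * N * s * r / c₀ * min Vpar Vslab + 2 * N * γ / (N' * c₀) * min Vpar Vslab +
        (2 * δ / c₀ + 1) * min Vpar Vslab := by
        field_simp
        ring
    _ ≤ 2 * N * s * r / c₀ * Vpar + 2 * N * γ / (N' * c₀) * Vslab + 2 * Vpar := by
        refine add_le_add (add_le_add (by gcongr) (by gcongr)) ?_
        exact (mul_le_mul_of_nonneg_right h2 (by positivity)).trans
          (mul_le_mul_of_nonneg_left hpar zero_le_two)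
    _ = _ := by
        rw [hVpar, hVslab]
        field_simp
        ring

section StripFamilies

variable {u v x₀ p : E2} {r δ γ : ℝ}

lemma abs_sub_inner_le_of_mem_strip_of_mem_ball {s : ℝ} (hp : p ∈ strip u s δ)
    (hpB : p ∈ ball x₀ r) : |s - ⟪u, x₀⟫| ≤ ‖u‖ * r + δ := by
  have hball := (abs_inner_sub_inner_le u p x₀).trans
    (mul_le_mul_of_nonneg_left (mem_ball.1 hpB).le (norm_nonneg u))
  rw [mem_strip, abs_lt] at hp
  rw [abs_le] at hball ⊢
  constructor <;> linarith

lemma abs_sq_sub_le_of_mem_strip_inter_strip_inter_ball {c : ℕ} {t : ℝ}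
    (hp : p ∈ strip u ((c : ℝ) ^ 2) δ ∩ strip v t γ ∩ ball x₀ r) (l : ℝ) :
    |(c : ℝ) ^ 2 - (l * t + ⟪u - l • v, x₀⟫)| ≤ ‖u - l • v‖ * r + |l| * γ + δ := by
  obtain ⟨⟨hu, hv⟩, hpB⟩ := hp
  have hsplit : ⟪u, p⟫ = ⟪u - l • v, p⟫ + l * ⟪v, p⟫ := by
    rw [inner_sub_left, real_inner_smul_left]; ring
  have hw := (abs_inner_sub_inner_le (u - l • v) p x₀).trans
    (mul_le_mul_of_nonneg_left (mem_ball.1 hpB).le (norm_nonneg _))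
  have hlv : |l * ⟪v, p⟫ - l * t| ≤ |l| * γ := by
    rw [← mul_sub, abs_mul]
    exact mul_le_mul_of_nonneg_left (mem_strip.1 hv).le (abs_nonneg l)
  rw [mem_strip, abs_lt] at hu
  rw [abs_le] at hw hlv ⊢
  constructor <;> linarith

lemma le_of_mem_strip_sq {c : ℕ} {c₀ : ℝ} (hp : p ∈ strip u ((c : ℝ) ^ 2) δ) (hc₀ : 0 ≤ c₀)
    (h : c₀ ^ 2 + δ ≤ ⟪u, p⟫) : c₀ ≤ c := by
  have := (abs_lt.1 (mem_strip.1 hp)).2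
  exact (pow_le_pow_iff_left₀ hc₀ c.cast_nonneg two_ne_zero).1 (by linarith)

theorem volume_strip_inter_strip_inter_ball_le (s t : ℝ) (hδ : 0 ≤ δ)
    (huv : u 0 * v 1 - u 1 * v 0 ≠ 0) :
    volume (strip u s δ ∩ strip v t γ ∩ ball x₀ r) ≤ ENNReal.ofReal
      (min (4 * δ * γ / (‖u‖ * ‖v‖ * Real.sin (angle u v))) (4 * δ * r / ‖u‖)) := by
  have hu : u ≠ 0 := by rintro rfl; simp at huv
  rw [ENNReal.ofReal_min]
  refine le_min ?_ ?_
  · calc _ ≤ volume (strip u s δ ∩ strip v t γ) := measure_mono inter_subset_left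
      _ = _ := by
        rw [volume_strip_inter_strip _ _ _ _ _ _ hδ huv, ← sin_angle_mul_norm_mul_norm_eq_abs,
          mul_comm (Real.sin _)]
  · calc _ ≤ volume (strip u s δ ∩ ball x₀ r) :=
          measure_mono (inter_subset_inter_left _ inter_subset_left)
      _ ≤ _ := volume_strip_inter_ball_le u x₀ s hδ hu

theorem volume_iUnion_strip_inter_strip_inter_ball_le (t : ℝ) {c₀ : ℝ} (hδ : 0 ≤ δ)
    (hγ : 0 ≤ γ) (hr : 0 ≤ r) (hc₀ : 0 < c₀) (hδc₀ : 2 * δ ≤ c₀)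
    (huv : u 0 * v 1 - u 1 * v 0 ≠ 0) (hu : ∀ p ∈ ball x₀ r, c₀ ^ 2 + δ ≤ ⟪u, p⟫) :
    volume ((⋃ c : ℕ, strip u ((c : ℝ) ^ 2) δ) ∩ strip v t γ ∩ ball x₀ r) ≤
      ENNReal.ofReal (16 * δ * γ * r / (‖v‖ * c₀) +
        8 * δ * γ / (‖u‖ * ‖v‖ * Real.sin (angle u v))) := by
  have hu0 : 0 < ‖u‖ := norm_pos_iff.2 (by rintro rfl; simp at huv)
  have hv : v ≠ 0 := by rintro rfl; simp at huv
  have hs := sin_angle_pos_of_cross_ne_zero huv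
  set l := ⟪u, v⟫ / ‖v‖ ^ 2
  have hcount : ∀ c : ℕ, (strip u ((c : ℝ) ^ 2) δ ∩ strip v t γ ∩ ball x₀ r).Nonempty →
      c₀ ≤ c ∧ |(c : ℝ) ^ 2 - (l * t + ⟪u - l • v, x₀⟫)| ≤
        ‖u‖ * Real.sin (angle u v) * r + ‖u‖ / ‖v‖ * γ + δ := by
    rintro c ⟨p, hp⟩
    refine ⟨le_of_mem_strip_sq hp.1.1 hc₀.le (hu p hp.2), ?_⟩
    refine (abs_sq_sub_le_of_mem_strip_inter_strip_inter_ball hp l).trans ?_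
    rw [norm_sub_smul_eq_norm_mul_sin_angle u hv]
    gcongr
    exact abs_inner_div_norm_sq_le u v
  rw [iUnion_inter, iUnion_inter]
  refine (measure_iUnion_le_of_sq_near _ _ hc₀ (by positivity)
    (fun c => volume_strip_inter_strip_inter_ball_le _ _ hδ huv) hcount).trans ?_
  rw [← ENNReal.ofReal_mul (by positivity)]
  exact ENNReal.ofReal_le_ofReal <|
    strip_cell_bound_le hu0 (norm_pos_iff.2 hv) hs hr hδ hγ hc₀ hδc₀

theorem volume_iUnion_strip_inter_iUnion_strip_inter_ball_le {c₀ c₀' : ℝ} (hδ : 0 ≤ δ)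
    (hγ : 0 ≤ γ) (hr : 0 ≤ r) (hc₀ : 0 < c₀) (hc₀' : 0 < c₀') (hδc₀ : 2 * δ ≤ c₀)
    (huv : u 0 * v 1 - u 1 * v 0 ≠ 0) (hu : ∀ p ∈ ball x₀ r, c₀ ^ 2 + δ ≤ ⟪u, p⟫)
    (hv : ∀ p ∈ ball x₀ r, c₀' ^ 2 + γ ≤ ⟪v, p⟫) :
    volume ((⋃ c : ℕ, strip u ((c : ℝ) ^ 2) δ) ∩ (⋃ c : ℕ, strip v ((c : ℝ) ^ 2) γ) ∩
        ball x₀ r) ≤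
      ENNReal.ofReal ((2 * (‖v‖ * r + γ) / c₀' + 1) *
        (16 * δ * γ * r / (‖v‖ * c₀) + 8 * δ * γ / (‖u‖ * ‖v‖ * Real.sin (angle u v)))) := by
  rw [inter_iUnion, iUnion_inter, ENNReal.ofReal_mul (by positivity)]
  refine measure_iUnion_le_of_sq_near (t := ⟪v, x₀⟫) _ _ hc₀' (by positivity)
    (fun c' => volume_iUnion_strip_inter_strip_inter_ball_le _ hδ hγ hr hc₀ hδc₀ huv hu) ?_
  rintro c' ⟨p, ⟨-, hp⟩, hpB⟩
  refine ⟨le_of_mem_strip_sq hp hc₀'.le (hv p hpB), ?_⟩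
  exact abs_sub_inner_le_of_mem_strip_of_mem_ball hp hpB

end StripFamilies

section VSq

variable (a b : ℕ)

lemma inner_vSq (p : E2) : ⟪vSq a b, p⟫ = (a : ℝ) ^ 2 * p 0 + (b : ℝ) ^ 2 * p 1 :=
  inner_fin_two _ _

lemma sigU_subset_iUnion_strip (ψ : ℝ → ℝ) :
    sigU ψ a b ⊆ ⋃ c : ℕ, strip (vSq a b) ((c : ℝ) ^ 2) (ψ (max a b : ℕ)) :=
  iUnion_mono fun _ _ hp => by rw [mem_strip, inner_vSq]; exact hp.2.2

lemma norm_vSq_sq : ‖vSq a b‖ ^ 2 = (a : ℝ) ^ 4 + (b : ℝ) ^ 4 := by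
  rw [← real_inner_self_eq_norm_sq, inner_vSq]
  simp [vSq]
  ring

lemma sq_max_le_norm_vSq : ((max a b : ℕ) : ℝ) ^ 2 ≤ ‖vSq a b‖ := by
  rw [← pow_le_pow_iff_left₀ (by positivity) (norm_nonneg _) two_ne_zero, norm_vSq_sq]
  rcases max_choice a b with h | h <;> rw [h] <;>
    nlinarith [pow_nonneg (a.cast_nonneg (α := ℝ)) 4, pow_nonneg (b.cast_nonneg (α := ℝ)) 4]

lemma norm_vSq_le : ‖vSq a b‖ ≤ 2 * ((max a b : ℕ) : ℝ) ^ 2 := by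
  rw [← pow_le_pow_iff_left₀ (norm_nonneg _) (by positivity) two_ne_zero, norm_vSq_sq]
  have ha : (a : ℝ) ^ 4 ≤ ((max a b : ℕ) : ℝ) ^ 4 := by gcongr; exact le_max_left a b
  have hb : (b : ℝ) ^ 4 ≤ ((max a b : ℕ) : ℝ) ^ 4 := by gcongr; exact le_max_right a b
  nlinarith

lemma mul_sq_max_le_inner_vSq {ε : ℝ} (hε : 0 ≤ ε) {p : E2} (hp : p ∈ unitSq ε) :
    ε * ((max a b : ℕ) : ℝ) ^ 2 ≤ ⟪vSq a b, p⟫ := by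
  obtain ⟨⟨hp0, -⟩, hp1, -⟩ := hp
  rw [inner_vSq]
  have hmax : ((max a b : ℕ) : ℝ) ^ 2 ≤ (a : ℝ) ^ 2 + (b : ℝ) ^ 2 := by
    rcases max_choice a b with h | h <;> rw [h] <;> linarith [sq_nonneg (a : ℝ), sq_nonneg (b : ℝ)]
  nlinarith [mul_le_mul_of_nonneg_left hp0 (sq_nonneg (a : ℝ)),
    mul_le_mul_of_nonneg_left hp1 (sq_nonneg (b : ℝ))]

lemma sq_add_le_inner_vSq {ε δ : ℝ} (hε : 0 < ε) (hε1 : ε ≤ 1) (hab : 1 ≤ max a b)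
    (hδ : δ ≤ ε / 4) {p : E2} (hp : p ∈ unitSq ε) :
    (ε * ((max a b : ℕ) : ℝ) / 2) ^ 2 + δ ≤ ⟪vSq a b, p⟫ := by
  have hH : (1 : ℝ) ≤ ((max a b : ℕ) : ℝ) := by exact_mod_cast hab
  have hH2 : (1 : ℝ) ≤ ((max a b : ℕ) : ℝ) ^ 2 := one_le_pow₀ hH
  have := mul_sq_max_le_inner_vSq a b hε.le hp
  nlinarith [mul_le_mul_of_nonneg_left hε1 (by positivity : 0 ≤ ε * ((max a b : ℕ) : ℝ) ^ 2),
    mul_le_mul_of_nonneg_left hH2 hε.le]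

end VSq

lemma mul_ne_mul_of_coprime {a b a' b' : ℕ} (hne : (a, b) ≠ (a', b')) (h : Nat.Coprime a b)
    (h' : Nat.Coprime a' b') : a * b' ≠ b * a' := by
  intro heq
  have ha : a ∣ a' := h.dvd_of_dvd_mul_left (heq ▸ dvd_mul_right a b')
  have ha' : a' ∣ a := h'.dvd_of_dvd_mul_right (heq ▸ dvd_mul_left a' b)
  have hb : b ∣ b' := h.symm.dvd_of_dvd_mul_left (heq ▸ dvd_mul_right b a')
  have hb' : b' ∣ b := h'.symm.dvd_of_dvd_mul_right (heq ▸ dvd_mul_left b' a)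
  exact hne (Prod.ext (Nat.dvd_antisymm ha ha') (Nat.dvd_antisymm hb hb'))

lemma cross_vSq_ne_zero {a b a' b' : ℕ} (hne : (a, b) ≠ (a', b')) (h : Nat.gcd a b = 1)
    (h' : Nat.gcd a' b' = 1) : vSq a b 0 * vSq a' b' 1 - vSq a b 1 * vSq a' b' 0 ≠ 0 := by
  simp only [vSq, PiLp.toLp_apply, Matrix.cons_val_zero, Matrix.cons_val_one, sub_ne_zero]
  intro heq
  refine mul_ne_mul_of_coprime hne h h' (Nat.pow_left_injective two_ne_zero ?_)
  show (a * b') ^ 2 = (b * a') ^ 2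
  rw [mul_pow, mul_pow]
  exact_mod_cast heq

lemma strip_family_bound_le {ε r H H' N N' s δ γ : ℝ} (hε : 0 < ε) (hε1 : ε ≤ 1) (hr : 0 < r)
    (hH' : 1 ≤ H') (hrH' : 1 ≤ r * H') (hH'H : H' ≤ H) (hN : H ^ 2 ≤ N) (hN'l : H' ^ 2 ≤ N')
    (hN'u : N' ≤ 2 * H' ^ 2) (hs : 0 < s) (hδ : 0 ≤ δ) (hγ : 0 ≤ γ) (hγ1 : γ ≤ 1) :
    (2 * (N' * r + γ) / (ε * H' / 2) + 1) *
        (16 * δ * γ * r / (N' * (ε * H / 2)) + 8 * δ * γ / (N * N' * s)) ≤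
      416 / ε ^ 2 * (δ / H) * (γ / H') * (1 + 1 / (r * H * s)) * r ^ 2 := by
  have hH : 0 < H := by linarith
  have hN0 : 0 < N := lt_of_lt_of_le (by positivity) hN
  have hN'0 : 0 < N' := lt_of_lt_of_le (by positivity) hN'l
  have hcount : 2 * (N' * r + γ) / (ε * H' / 2) + 1 ≤ 13 * r * H' / ε := by
    have hrH'2 : r * H' ≤ r * H' ^ 2 := by nlinarith
    have hH'2 : H' ≤ r * H' ^ 2 := by nlinarith
    have key : 2 * (N' * r + γ) + ε * H' / 2 ≤ 13 / 2 * r * H' ^ 2 := by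
      nlinarith [mul_le_mul_of_nonneg_right hN'u hr.le]
    rw [div_add_one (by positivity), div_le_div_iff₀ (by positivity) hε]
    nlinarith [mul_le_mul_of_nonneg_left key hε.le]
  have hε' : 104 / ε ≤ 416 / ε ^ 2 := by
    rw [div_le_div_iff₀ hε (by positivity)]; nlinarith
  calc _ ≤ 13 * r * H' / ε *
        (16 * δ * γ * r / (H' ^ 2 * (ε * H / 2)) + 8 * δ * γ / (H ^ 2 * H' ^ 2 * s)) := by
        gcongr
    _ = 416 / ε ^ 2 * (δ / H) * (γ / H') * r ^ 2 +
        104 / ε * (δ / H) * (γ / H') * (r / (H * s)) := by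
        field_simp
        ring
    _ ≤ 416 / ε ^ 2 * (δ / H) * (γ / H') * r ^ 2 +
        416 / ε ^ 2 * (δ / H) * (γ / H') * (r / (H * s)) := by
        gcongr
    _ = _ := by
        field_simp

theorem volume_sigU_inter_sigU_inter_ball_le {ε r : ℝ} {ψ : ℝ → ℝ} {x₀ : E2} {a b a' b' : ℕ}
    (hε : 0 < ε) (hε1 : ε ≤ 1) (hr : 0 < r) (hB : ball x₀ r ⊆ unitSq ε)
    (hne : (a, b) ≠ (a', b')) (hg : Nat.gcd a b = 1) (hg' : Nat.gcd a' b' = 1)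
    (hle : max a' b' ≤ max a b) (hrH' : 1 ≤ r * (max a' b' : ℕ)) (hψ : ∀ x, 0 < x → 0 < ψ x)
    (hψH : ψ (max a b : ℕ) < ε / 4) (hψH' : ψ (max a' b' : ℕ) < ε / 4) :
    volume (sigU ψ a b ∩ sigU ψ a' b' ∩ ball x₀ r) ≤
      ENNReal.ofReal (416 / ε ^ 2 * (ψ (max a b : ℕ) / (max a b : ℕ)) *
        (ψ (max a' b' : ℕ) / (max a' b' : ℕ)) *
        (1 + 1 / (r * (max a b : ℕ) * Real.sin (ang a b a' b')))) * volume (ball x₀ r) := by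
  have hH' : 1 ≤ max a' b' := Nat.cast_pos.1 (pos_of_mul_pos_right (by linarith) hr.le)
  have hH'R : (1 : ℝ) ≤ (max a' b' : ℕ) := by exact_mod_cast hH'
  have hleR : ((max a' b' : ℕ) : ℝ) ≤ (max a b : ℕ) := by exact_mod_cast hle
  have hH0 : (0 : ℝ) < (max a b : ℕ) := by linarith
  have hH'0 : (0 : ℝ) < (max a' b' : ℕ) := by linarith
  have hδ := (hψ _ hH0).le
  have hγ := (hψ _ hH'0).le
  have huv := cross_vSq_ne_zero hne hg hg'
  have hs := sin_angle_pos_of_cross_ne_zero huv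
  calc _ ≤ volume ((⋃ c : ℕ, strip (vSq a b) ((c : ℝ) ^ 2) (ψ (max a b : ℕ))) ∩
        (⋃ c : ℕ, strip (vSq a' b') ((c : ℝ) ^ 2) (ψ (max a' b' : ℕ))) ∩ ball x₀ r) := by
        gcongr <;> apply sigU_subset_iUnion_strip
    _ ≤ _ := volume_iUnion_strip_inter_iUnion_strip_inter_ball_le hδ hγ hr.le (by positivity)
        (by positivity) (by nlinarith) huv
        (fun p hp => sq_add_le_inner_vSq a b hε hε1 (hH'.trans hle) hψH.le (hB hp))
        (fun p hp => sq_add_le_inner_vSq a' b' hε hε1 hH' hψH'.le (hB hp))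
    _ ≤ ENNReal.ofReal (416 / ε ^ 2 * (ψ (max a b : ℕ) / (max a b : ℕ)) *
          (ψ (max a' b' : ℕ) / (max a' b' : ℕ)) *
          (1 + 1 / (r * (max a b : ℕ) * Real.sin (ang a b a' b'))) * r ^ 2) :=
        ENNReal.ofReal_le_ofReal <| strip_family_bound_le hε hε1 hr hH'R hrH' hleR
          (sq_max_le_norm_vSq a b) (sq_max_le_norm_vSq a' b') (norm_vSq_le a' b') hs hδ hγ
          (by linarith)
    _ ≤ _ := by
        rw [ENNReal.ofReal_mul (by unfold ang; positivity)]
        gcongr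
        exact ofReal_sq_le_volume_ball x₀ hr.le

theorem volume_pairwise_intersection
    (ε : ℝ) (hε : ε ∈ Set.Ioo (0 : ℝ) 1) :
    ∃ C : ℝ, 0 < C ∧
      ∀ ψ : ℝ → ℝ,
        (∀ x : ℝ, 0 < x → 0 < ψ x) →
        AntitoneOn ψ (Set.Ioi 0) →
        Tendsto ψ atTop (nhds 0) →
        ∀ (x₀ : EuclideanSpace ℝ (Fin 2)) (r : ℝ), 0 < r →
          Metric.ball x₀ r ⊆ unitSq ε →
          ∃ H₀ : ℕ, ∀ a b a' b' : ℕ, (a, b) ≠ (a', b') →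
            Nat.gcd a b = 1 → Nat.gcd a' b' = 1 →
            max a' b' ≤ max a b → H₀ ≤ max a' b' →
            volume (sigU ψ a b ∩ sigU ψ a' b' ∩ Metric.ball x₀ r) ≤
              ENNReal.ofReal (C * (ψ ((max a b : ℕ) : ℝ) / ((max a b : ℕ) : ℝ)) *
                  (ψ ((max a' b' : ℕ) : ℝ) / ((max a' b' : ℕ) : ℝ)) *
                  (1 + 1 / (r * ((max a b : ℕ) : ℝ) * Real.sin (ang a b a' b')))) *
                volume (Metric.ball x₀ r) := by
  obtain ⟨hε0, hε1⟩ := hε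
  refine ⟨416 / ε ^ 2, by positivity, fun ψ hψ _ hψ0 x₀ r hr hB => ?_⟩
  have hψε : ∀ᶠ n : ℕ in atTop, ψ n < ε / 4 :=
    (hψ0.comp tendsto_natCast_atTop_atTop).eventually (gt_mem_nhds (by positivity))
  obtain ⟨H₀, hH₀⟩ :=
    eventually_atTop.1 (hψε.and (tendsto_natCast_atTop_atTop.eventually_ge_atTop (1 / r)))
  refine ⟨H₀, fun a b a' b' hne hg hg' hle hH₀' => ?_⟩
  obtain ⟨hψH, -⟩ := hH₀ _ (hH₀'.trans hle)
  obtain ⟨hψH', hrH'⟩ := hH₀ _ hH₀'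
  rw [div_le_iff₀ hr, mul_comm] at hrH'
  exact volume_sigU_inter_sigU_inter_ball_le hε0 hε1.le hr hB hne hg hg' hle hrH' hψ hψH hψH'
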